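/- Let C be a counter machine and ℂ the Σ_C-Nmatrix induced by C. For every formula A ∈ L_{Σ_C}(P): the computation comp(C, 0⃗) of C starting with all counters set to zero is finite and A = seq(comp(C, 0⃗)) if and only if A is a theorem of ⟨Σ_C, ⊢_ℂ⟩ (i.e. ∅ ⊢_ℂ A). -/

import Mathlib

structure Signature where
  Conn : Type
  arity : Conn → ℕ

inductive Fm (S : Signature) : Type where
  | var : ℕ → Fm S
  | app : (c : S.Conn) → (Fin (S.arity c) → Fm S) → Fm S

def Fm.subst {S : Signature} (σ : ℕ → Fm S) : Fm S → Fm S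
  | .var i => σ i
  | .app c args => .app c (fun j => (args j).subst σ)

def Fm.varsLT {S : Signature} (n : ℕ) : Fm S → Prop
  | .var i => i < n
  | .app _ args => ∀ j, (args j).varsLT n

structure NMatrix (S : Signature) (V : Type) where
  D : Set V
  interp : (c : S.Conn) → (Fin (S.arity c) → V) → Set V
  interp_nonempty : ∀ c args, (interp c args).Nonempty

def IsVal {S : Signature} {V : Type} (M : NMatrix S V) (v : Fm S → V) : Prop :=
  ∀ (c : S.Conn) (args : Fin (S.arity c) → Fm S),
    v (Fm.app c args) ∈ M.interp c (fun i => v (args i))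

def Entails {S : Signature} {V : Type} (M : NMatrix S V) (Γ : Set (Fm S)) (A : Fm S) : Prop :=
  ∀ v, IsVal M v → (∀ B ∈ Γ, v B ∈ M.D) → v A ∈ M.D

def Interderiv {S : Signature} {V : Type} (M : NMatrix S V) (A B : Fm S) : Prop :=
  Entails M {A} B ∧ Entails M {B} A

def Deterministic {S : Signature} {V : Type} (M : NMatrix S V) : Prop :=
  ∀ c args, ∃ x, M.interp c args = {x}

inductive CMNum : Type where
  | r0 | ge0 | ge1 | ge2
deriving DecidableEq

inductive CMInstr (n : ℕ) (Q : Type) : Type where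
  | inc : Fin n → Q → CMInstr n Q
  | dec : Fin n → Q → Q → CMInstr n Q

structure CounterMachine where
  n : ℕ
  Q : Type
  finQ : Finite Q
  qinit : Q
  δ : Q → Option (CMInstr n Q)

inductive CMVal (C : CounterMachine) : Type where
  | num : CMNum → CMVal C
  | conf : C.Q → (Fin C.n → CMNum) → CMVal C
  | init : CMVal C
  | error : CMVal C

inductive CMConn (C : CounterMachine) : Type where
  | zero : CMConn C
  | eps : CMConn C
  | succ : CMConn C
  | step : C.Q → CMConn C

def CMSig (C : CounterMachine) : Signature where
  Conn := CMConn C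
  arity := fun c => match c with
    | .zero => 0
    | .eps => 0
    | .succ => 1
    | .step _ => C.n + 1

/-- Interpretation of `succ` on abstract numbers. -/
def zeroNum : Set CMNum := {.r0, .ge0}

def succNum : CMNum → Set CMNum
  | .r0 => {.ge1}
  | .ge0 => {.ge0, .ge1}
  | .ge1 => {.ge2}
  | .ge2 => {.ge2}

/-- Interpretation of `succ` in the Nmatrix induced by `C`. -/
def succC (C : CounterMachine) : CMVal C → Set (CMVal C)
  | .num x => CMVal.num '' succNum x
  | _ => {.error}

/-- Interpretation of `zero` in the Nmatrix induced by `C`. -/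
def zeroC (C : CounterMachine) : Set (CMVal C) := {.num .r0, .num .ge0}

/-- The condition under which `step^q` applied to `x` and a tuple of numbers `zn`
produces the configuration value `conf q zn`. -/
def stepOK (C : CounterMachine) (q : C.Q) (x : CMVal C) (zn : Fin C.n → CMNum) : Prop :=
  (x = CMVal.init ∧ q = C.qinit ∧ ((∀ i, zn i = .r0) ∨ (∀ i, zn i = .ge0))) ∨
  (∃ (q' : C.Q) (yn : Fin C.n → CMNum), x = CMVal.conf q' yn ∧
    ((∃ i, C.δ q' = some (.inc i q) ∧ zn i ∈ succNum (yn i) ∧ ∀ l, l ≠ i → zn l = yn l) ∨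
     (∃ i s, C.δ q' = some (.dec i q s) ∧ yn i ∈ succNum (zn i) ∧ ∀ l, l ≠ i → zn l = yn l) ∨
     (∃ i s, C.δ q' = some (.dec i s q) ∧ yn i ∈ zeroNum ∧ zn = yn)))

/-- Interpretation of `step^q` in the Nmatrix induced by `C`. -/
def stepC (C : CounterMachine) (q : C.Q) (x : CMVal C) (z : Fin C.n → CMVal C) :
    Set (CMVal C) :=
  { w | (∃ zn : Fin C.n → CMNum, (∀ i, z i = .num (zn i)) ∧ stepOK C q x zn ∧
          w = .conf q zn) ∨
        (¬ (∃ zn : Fin C.n → CMNum, (∀ i, z i = .num (zn i)) ∧ stepOK C q x zn) ∧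
          w = .error) }

lemma succC_nonempty (C : CounterMachine) (x : CMVal C) : (succC C x).Nonempty := by
  cases x with
  | num y =>
      cases y
      · exact ⟨.num .ge1, by simp [succC, succNum]⟩
      · exact ⟨.num .ge0, by simp [succC, succNum]⟩
      · exact ⟨.num .ge2, by simp [succC, succNum]⟩
      · exact ⟨.num .ge2, by simp [succC, succNum]⟩
  | conf q r => exact ⟨.error, rfl⟩
  | init => exact ⟨.error, rfl⟩
  | error => exact ⟨.error, rfl⟩

lemma stepC_nonempty (C : CounterMachine) (q : C.Q) (x : CMVal C)
    (z : Fin C.n → CMVal C) : (stepC C q x z).Nonempty := by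
  by_cases h : ∃ zn : Fin C.n → CMNum, (∀ i, z i = .num (zn i)) ∧ stepOK C q x zn
  · obtain ⟨zn, hz, hok⟩ := h
    exact ⟨.conf q zn, Or.inl ⟨zn, hz, hok, rfl⟩⟩
  · exact ⟨.error, Or.inr ⟨h, rfl⟩⟩

/-- The Nmatrix ℂ induced by the counter machine `C`. -/
def CMmatrix (C : CounterMachine) : NMatrix (CMSig C) (CMVal C) where
  D := { w | ∃ (q : C.Q) (r : Fin C.n → CMNum), w = CMVal.conf q r ∧ C.δ q = none }
  interp := fun c => match c with
    | .zero => fun _ => zeroC C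
    | .eps => fun _ => {CMVal.init}
    | .succ => fun args => succC C (args ⟨0, Nat.one_pos⟩)
    | .step q => fun args => stepC C q (args ⟨0, Nat.succ_pos _⟩) (fun i => args i.succ)
  interp_nonempty := by
    intro c args
    cases c with
    | zero => exact ⟨.num .r0, Or.inl rfl⟩
    | eps => exact ⟨.init, rfl⟩
    | succ => exact succC_nonempty C _
    | step q => exact stepC_nonempty C q _ _

/-- Encoding of natural numbers as closed formulas. -/
def enc (C : CounterMachine) : ℕ → Fm (CMSig C)
  | 0 => .app .zero (fun i => i.elim0)
  | a + 1 => .app .succ (fun _ => enc C a)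

/-- Configurations of a counter machine. -/
def Config (C : CounterMachine) : Type := C.Q × (Fin C.n → ℕ)

/-- One step of computation: `none` when the configuration is halting. -/
def nextConf (C : CounterMachine) (cfg : Config C) : Option (Config C) :=
  match C.δ cfg.1 with
  | none => none
  | some (.inc i q') => some (q', Function.update cfg.2 i (cfg.2 i + 1))
  | some (.dec i q' q'') =>
      if cfg.2 i = 0 then some (q'', cfg.2)
      else some (q', Function.update cfg.2 i (cfg.2 i - 1))

/-- The configuration reached after `k` steps starting from ⟨q_init, 0⃗⟩, or `none` if the
machine has already halted strictly before step `k`. -/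
def steps (C : CounterMachine) : ℕ → Option (Config C)
  | 0 => some (C.qinit, fun _ => 0)
  | k + 1 => (steps C k).bind (nextConf C)

/-- A configuration is halting when the transition function is undefined on its state. -/
def Halting (C : CounterMachine) (cfg : Config C) : Prop := C.δ cfg.1 = none

/-- Encoding of a reversed list of configurations as a formula (head = last configuration). -/
def seqRev (C : CounterMachine) : List (Config C) → Fm (CMSig C)
  | [] => .app .eps (fun i => i.elim0)
  | cfg :: rest =>
      .app (.step cfg.1) (Fin.cons (seqRev C rest) (fun i => enc C (cfg.2 i)))

/-- Encoding of a finite sequence of configurations as a formula. -/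
def seqFm (C : CounterMachine) (l : List (Config C)) : Fm (CMSig C) := seqRev C l.reverse

/-- The list of configurations ⟨C₀, …, C_k⟩ of the computation of `C` from all counters zero. -/
def compList (C : CounterMachine) (k : ℕ) : List (Config C) :=
  (List.range (k + 1)).filterMap (steps C)

/-!
Every valuation of ℂ maps the numerals to an abstraction `g : ℕ → CMNum` of the naturals
(`g 0 ∈ zeroNum`, `g (a + 1) ∈ succNum (g a)`), and `step^q` over-approximates one machine
step read through `g`; so by induction on the run, `seq` of the first `k + 1` configurations
always evaluates to the last configuration, abstracted by `g`. This gives soundness.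

Conversely, the abstraction `exact` (distinguishing `0`, `1`, `≥ 2`) and the abstractions
`threshold m` (`≥ 0` up to `m`, then `≥ 1`, then `≥ 2`) separate the naturals well enough that
a transition allowed under all of them is an actual step of the machine. Each abstraction `f`
induces a valuation `absVal f` of ℂ; a theorem is designated under all of them, and peeling off
its outermost `step` connectives recovers the computation step by step.
-/

namespace CMNum

/-- `f a` is the value of the numeral `enc a` under some valuation of ℂ. -/
def IsAbstraction (f : ℕ → CMNum) : Prop :=
  f 0 ∈ zeroNum ∧ ∀ a, f (a + 1) ∈ succNum (f a)

def exact : ℕ → CMNum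
  | 0 => r0
  | 1 => ge1
  | _ + 2 => ge2

def threshold (m a : ℕ) : CMNum :=
  if a ≤ m then ge0 else if a = m + 1 then ge1 else ge2

lemma r0_notMem_succNum (x : CMNum) : r0 ∉ succNum x := by
  cases x <;> simp [succNum]

lemma isAbstraction_exact : IsAbstraction exact := by
  refine ⟨by simp [exact, zeroNum], fun a => ?_⟩
  rcases a with _ | _ | a <;> simp [exact, succNum]

lemma isAbstraction_threshold (m : ℕ) : IsAbstraction (threshold m) := by
  refine ⟨by simp [threshold, zeroNum], fun a => ?_⟩
  simp only [threshold]
  split_ifs <;> first | omega | simp [succNum]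

lemma exact_eq_r0_iff {a : ℕ} : exact a = r0 ↔ a = 0 := by
  rcases a with _ | _ | a <;> simp [exact]

lemma exact_ne_ge0 (a : ℕ) : exact a ≠ ge0 := by
  rcases a with _ | _ | a <;> simp [exact]

lemma exact_mem_zeroNum_iff {a : ℕ} : exact a ∈ zeroNum ↔ a = 0 := by
  rcases a with _ | _ | a <;> simp [exact, zeroNum]

lemma threshold_eq_ge0_iff {m a : ℕ} : threshold m a = ge0 ↔ a ≤ m := by
  simp only [threshold]
  split_ifs <;> simp only [true_iff, false_iff, not_le] <;> omega

lemma eq_of_forall_isAbstraction {a b : ℕ} (h : ∀ f, IsAbstraction f → f a = f b) :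
    a = b := by
  have hab := h (threshold a) (isAbstraction_threshold a)
  have hba := h (threshold b) (isAbstraction_threshold b)
  rw [threshold_eq_ge0_iff.2 le_rfl, eq_comm, threshold_eq_ge0_iff] at hab
  rw [threshold_eq_ge0_iff.2 le_rfl, threshold_eq_ge0_iff] at hba
  omega

/-- Relativised to `f x ∉ zeroNum` because that is all a `dec` step guarantees. -/
lemma eq_succ_of_forall_isAbstraction {x y : ℕ} (hx : x ≠ 0)
    (h : ∀ f, IsAbstraction f → f x ∉ zeroNum → f x ∈ succNum (f y)) : x = y + 1 := by
  have hle := h (threshold (x - 1)) (isAbstraction_threshold _)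
  have hge := h (threshold y) (isAbstraction_threshold _)
  simp only [threshold, zeroNum, succNum] at hle hge
  split_ifs at hle hge <;>
    simp only [Set.mem_insert_iff, Set.mem_singleton_iff, reduceCtorEq, or_true, or_false, or_self,
      not_true_eq_false, not_false_eq_true, implies_true, imp_self, imp_false] at hle hge <;>
    omega

lemma eq_succ_of_forall_mem_succNum {x y : ℕ}
    (h : ∀ f, IsAbstraction f → f x ∈ succNum (f y)) : x = y + 1 := by
  refine eq_succ_of_forall_isAbstraction ?_ fun f hf _ => h f hf
  rintro rfl
  exact r0_notMem_succNum _ (h exact isAbstraction_exact)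

end CMNum

namespace CounterMachine

open CMNum

variable {C : CounterMachine}

lemma stepOK_init_iff {q : C.Q} {zn : Fin C.n → CMNum} :
    stepOK C q .init zn ↔ q = C.qinit ∧ ((∀ i, zn i = r0) ∨ (∀ i, zn i = ge0)) := by
  simp [stepOK]

lemma not_stepOK_conf_of_none {q q' : C.Q} {yn zn : Fin C.n → CMNum} (hδ : C.δ q' = none) :
    ¬ stepOK C q (.conf q' yn) zn := by
  simp [stepOK, hδ]

lemma stepOK_conf_of_inc {q q' q₀ : C.Q} {i : Fin C.n} {yn zn : Fin C.n → CMNum}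
    (hδ : C.δ q' = some (.inc i q₀)) :
    stepOK C q (.conf q' yn) zn ↔
      q₀ = q ∧ zn i ∈ succNum (yn i) ∧ ∀ l ≠ i, zn l = yn l := by
  simp [stepOK, hδ]

lemma stepOK_conf_of_dec {q q' q₁ q₂ : C.Q} {i : Fin C.n} {yn zn : Fin C.n → CMNum}
    (hδ : C.δ q' = some (.dec i q₁ q₂)) :
    stepOK C q (.conf q' yn) zn ↔
      (q₁ = q ∧ yn i ∈ succNum (zn i) ∧ ∀ l ≠ i, zn l = yn l) ∨
      (q₂ = q ∧ yn i ∈ zeroNum ∧ ∀ l, zn l = yn l) := by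
  simp [stepOK, hδ, ← funext_iff]

lemma forall_stepOK_init_iff {q : C.Q} {a : Fin C.n → ℕ} :
    (∀ f, IsAbstraction f → stepOK C q .init (f ∘ a)) ↔ q = C.qinit ∧ a = 0 := by
  simp only [stepOK_init_iff, Function.comp_apply]
  constructor
  · intro h
    obtain ⟨rfl, hr0 | hge0⟩ := h exact isAbstraction_exact
    · exact ⟨rfl, funext fun i => exact_eq_r0_iff.1 (hr0 i)⟩
    · exact ⟨rfl, funext fun i => (exact_ne_ge0 _ (hge0 i)).elim⟩
  · rintro ⟨rfl, rfl⟩ f hf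
    rcases hf.1 with h0 | h0
    · exact ⟨rfl, Or.inl fun _ => h0⟩
    · exact ⟨rfl, Or.inr fun _ => h0⟩

lemma forall_stepOK_conf_iff_of_inc {q q₀ : C.Q} {i : Fin C.n} {cfg : Config C}
    {a : Fin C.n → ℕ} (hδ : C.δ cfg.1 = some (.inc i q₀)) :
    (∀ f, IsAbstraction f → stepOK C q (.conf cfg.1 (f ∘ cfg.2)) (f ∘ a)) ↔
      q₀ = q ∧ Function.update cfg.2 i (cfg.2 i + 1) = a := by
  simp only [stepOK_conf_of_inc hδ, Function.comp_apply, Function.update_eq_iff]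
  constructor
  · intro h
    obtain ⟨rfl, -, -⟩ := h exact isAbstraction_exact
    exact ⟨rfl, (eq_succ_of_forall_mem_succNum fun f hf => (h f hf).2.1).symm,
      fun l hl => (eq_of_forall_isAbstraction fun f hf => (h f hf).2.2 l hl).symm⟩
  · rintro ⟨rfl, hai, hal⟩ f hf
    exact ⟨rfl, hai ▸ hf.2 _, fun l hl => by rw [hal l hl]⟩

lemma forall_stepOK_conf_iff_of_dec {q q₁ q₂ : C.Q} {i : Fin C.n} {cfg : Config C}
    {a : Fin C.n → ℕ} (hδ : C.δ cfg.1 = some (.dec i q₁ q₂)) :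
    (∀ f, IsAbstraction f → stepOK C q (.conf cfg.1 (f ∘ cfg.2)) (f ∘ a)) ↔
      if cfg.2 i = 0 then q₂ = q ∧ cfg.2 = a
      else q₁ = q ∧ Function.update cfg.2 i (cfg.2 i - 1) = a := by
  obtain ⟨p, c⟩ := cfg
  simp only [stepOK_conf_of_dec hδ, Function.comp_apply, Function.update_eq_iff]
  constructor
  · intro h
    have hne : ∀ l ≠ i, c l = a l := fun l hl => eq_of_forall_isAbstraction fun f hf => by
      rcases h f hf with ⟨-, -, h'⟩ | ⟨-, -, h'⟩
      exacts [(h' l hl).symm, (h' l).symm]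
    split_ifs with hc
    · rcases h exact isAbstraction_exact with ⟨-, h0, -⟩ | ⟨rfl, -, hfa⟩
      · rw [hc] at h0
        exact absurd h0 (r0_notMem_succNum _)
      · refine ⟨rfl, funext fun l => ?_⟩
        rcases eq_or_ne l i with rfl | hl
        · rw [hc, eq_comm, ← exact_eq_r0_iff, hfa l, hc]
          rfl
        · exact hne l hl
    · rcases h exact isAbstraction_exact with ⟨rfl, -, -⟩ | ⟨-, h0, -⟩
      · have hsucc := eq_succ_of_forall_isAbstraction hc fun f hf hz => by
          rcases h f hf with ⟨-, h', -⟩ | ⟨-, h', -⟩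
          exacts [h', absurd h' hz]
        exact ⟨rfl, by omega, hne⟩
      · exact absurd (exact_mem_zeroNum_iff.1 h0) hc
  · split_ifs with hc
    · rintro ⟨rfl, rfl⟩ f hf
      exact Or.inr ⟨rfl, hc ▸ hf.1, fun _ => rfl⟩
    · rintro ⟨rfl, hai, hal⟩ f hf
      refine Or.inl ⟨rfl, ?_, fun l hl => by rw [hal l hl]⟩
      rw [← hai]
      simpa [Nat.sub_add_cancel (Nat.pos_of_ne_zero hc)] using hf.2 (c i - 1)

lemma forall_stepOK_conf_iff {q : C.Q} {cfg : Config C} {a : Fin C.n → ℕ} :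
    (∀ f, IsAbstraction f → stepOK C q (.conf cfg.1 (f ∘ cfg.2)) (f ∘ a)) ↔
      nextConf C cfg = some (q, a) := by
  rcases hδ : C.δ cfg.1 with _ | ⟨i, q₀⟩ | ⟨i, q₁, q₂⟩ <;> simp only [nextConf, hδ]
  · simpa [not_stepOK_conf_of_none hδ] using ⟨exact, isAbstraction_exact⟩
  · exact (forall_stepOK_conf_iff_of_inc hδ).trans (Option.some_inj.trans Prod.mk_inj).symm
  · rw [forall_stepOK_conf_iff_of_dec hδ]
    split_ifs <;> exact (Option.some_inj.trans Prod.mk_inj).symm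

lemma eq_conf_of_mem_stepC {q : C.Q} {x w : CMVal C} {z : Fin C.n → CMVal C}
    {zn : Fin C.n → CMNum} (hw : w ∈ stepC C q x z) (hz : ∀ i, z i = .num (zn i))
    (hok : stepOK C q x zn) : w = .conf q zn := by
  rcases hw with ⟨zn', hz', -, rfl⟩ | ⟨hne, -⟩
  · exact congrArg _ (funext fun i => CMVal.num.inj ((hz' i).symm.trans (hz i)))
  · exact absurd ⟨zn, hz, hok⟩ hne

lemma steps_succ_eq_some {k : ℕ} {cfg' : Config C} :
    steps C (k + 1) = some cfg' ↔ ∃ cfg, steps C k = some cfg ∧ nextConf C cfg = some cfg' :=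
  Option.bind_eq_some_iff

lemma seqFm_compList_zero :
    seqFm C (compList C 0) =
      .app (.step C.qinit) (Fin.cons (.app .eps fun i => i.elim0) fun _ => enc C 0) :=
  rfl

lemma compList_succ {k : ℕ} {cfg : Config C} (h : steps C (k + 1) = some cfg) :
    compList C (k + 1) = compList C k ++ [cfg] := by
  rw [compList, List.range_succ, List.filterMap_append]
  simp [compList, h]

lemma seqFm_compList_succ {k : ℕ} {cfg : Config C} (h : steps C (k + 1) = some cfg) :
    seqFm C (compList C (k + 1)) =
      .app (.step cfg.1) (Fin.cons (seqFm C (compList C k)) fun i => enc C (cfg.2 i)) := by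
  simp [compList_succ h, seqFm, seqRev]

end CounterMachine

namespace IsVal

open CMNum CounterMachine

variable {C : CounterMachine} {v : Fm (CMSig C) → CMVal C}

lemma exists_isAbstraction (hv : IsVal (CMmatrix C) v) :
    ∃ g, IsAbstraction g ∧ ∀ a, v (enc C a) = .num (g a) := by
  have hzero : v (enc C 0) ∈ zeroC C := hv .zero _
  have hsucc (a : ℕ) : v (enc C (a + 1)) ∈ succC C (v (enc C a)) := hv .succ fun _ => enc C a
  have hnum (a : ℕ) : ∃ r, v (enc C a) = .num r := by
    induction a with
    | zero => rcases hzero with h | h <;> exact ⟨_, h⟩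
    | succ a ih =>
      obtain ⟨r, hr⟩ := ih
      obtain ⟨r', -, hr'⟩ := hr ▸ hsucc a
      exact ⟨r', hr'.symm⟩
  choose g hg using hnum
  refine ⟨g, ⟨?_, fun a => ?_⟩, hg⟩
  · simpa [hg, zeroC, zeroNum] using hzero
  · simpa [hg, succC] using hsucc a

lemma apply_step (hv : IsVal (CMmatrix C) v) {q : C.Q} {B : Fm (CMSig C)}
    {zs : Fin C.n → Fm (CMSig C)} {zn : Fin C.n → CMNum} (hz : ∀ i, v (zs i) = .num (zn i))
    (hok : stepOK C q (v B) zn) : v (.app (.step q) (Fin.cons B zs)) = .conf q zn :=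
  eq_conf_of_mem_stepC (hv (.step q) (Fin.cons B zs)) hz hok

lemma apply_seqFm_compList (hv : IsVal (CMmatrix C) v) {g : ℕ → CMNum} (hg : IsAbstraction g)
    (hgv : ∀ a, v (enc C a) = .num (g a)) {k : ℕ} {cfg : Config C} (hk : steps C k = some cfg) :
    v (seqFm C (compList C k)) = .conf cfg.1 (g ∘ cfg.2) := by
  induction k generalizing cfg with
  | zero =>
    obtain rfl := Option.some.inj hk
    have heps : v (.app .eps fun i => i.elim0) = .init := hv .eps _
    rw [seqFm_compList_zero]
    exact hv.apply_step (fun _ => hgv 0) (heps ▸ forall_stepOK_init_iff.2 ⟨rfl, rfl⟩ g hg)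
  | succ k ih =>
    obtain ⟨cfg₀, hk₀, hnext⟩ := steps_succ_eq_some.1 hk
    rw [seqFm_compList_succ hk]
    exact hv.apply_step (fun i => hgv _) (ih hk₀ ▸ forall_stepOK_conf_iff.2 hnext g hg)

end IsVal

namespace CounterMachine

open CMNum

variable {C : CounterMachine}

lemma enc_injective : Function.Injective (enc C) := by
  intro a b h
  induction a generalizing b with
  | zero => cases b <;> first | rfl | cases (Fm.app.inj h).1
  | succ a ih =>
    cases b with
    | zero => cases (Fm.app.inj h).1
    | succ b =>
      exact congrArg (· + 1) (ih (congrFun (eq_of_heq (Fm.app.inj h).2) ⟨0, Nat.one_pos⟩))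

lemma conf_mem_stepC_iff {q q' : C.Q} {x : CMVal C} {z : Fin C.n → CMVal C}
    {r : Fin C.n → CMNum} :
    .conf q' r ∈ stepC C q x z ↔ (∀ i, z i = .num (r i)) ∧ stepOK C q x r ∧ q' = q := by
  simp [stepC]

lemma num_notMem_stepC {q : C.Q} {x : CMVal C} {z : Fin C.n → CMVal C} {y : CMNum} :
    .num y ∉ stepC C q x z := by
  rintro (⟨_, _, _, h⟩ | ⟨_, h⟩) <;> cases h

lemma init_notMem_stepC {q : C.Q} {x : CMVal C} {z : Fin C.n → CMVal C} :
    .init ∉ stepC C q x z := by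
  rintro (⟨_, _, _, h⟩ | ⟨_, h⟩) <;> cases h

lemma eq_init_or_conf_of_stepOK {q : C.Q} {x : CMVal C} {zn : Fin C.n → CMNum}
    (h : stepOK C q x zn) : x = .init ∨ ∃ q' yn, x = .conf q' yn := by
  rcases h with ⟨rfl, -⟩ | ⟨q', yn, rfl, -⟩
  exacts [Or.inl rfl, Or.inr ⟨q', yn, rfl⟩]

open Classical in
noncomputable def absVal (f : ℕ → CMNum) : Fm (CMSig C) → CMVal C
  | .var _ => .error
  | .app .zero _ => .num (f 0)
  | .app .eps _ => .init
  | .app .succ args =>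
    if h : ∃ a, args ⟨0, Nat.one_pos⟩ = enc C a then .num (f (h.choose + 1)) else .error
  | .app (.step q) args =>
    (stepC_nonempty C q (absVal f (args ⟨0, Nat.succ_pos _⟩))
      fun i => absVal f (args i.succ)).some

lemma absVal_step_mem (f : ℕ → CMNum) (q : C.Q) (args : Fin (C.n + 1) → Fm (CMSig C)) :
    absVal f (.app (.step q) args) ∈
      stepC C q (absVal f (args 0)) fun i => absVal f (args i.succ) :=
  Set.Nonempty.some_mem _

lemma absVal_enc (f : ℕ → CMNum) (a : ℕ) : absVal f (enc C a) = .num (f a) := by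
  cases a with
  | zero => rfl
  | succ a =>
    have h : ∃ b, enc C a = enc C b := ⟨a, rfl⟩
    simp only [enc, absVal, dif_pos h, enc_injective h.choose_spec.symm]

lemma exists_eq_enc_of_absVal_eq_num {f : ℕ → CMNum} {t : Fm (CMSig C)} {y : CMNum}
    (h : absVal f t = .num y) : ∃ a, t = enc C a := by
  rcases t with _ | ⟨_ | _ | _ | q, args⟩
  · cases h
  · exact ⟨0, congrArg _ (funext fun i => i.elim0)⟩
  · cases h
  · simp only [absVal] at h
    split_ifs at h with ha
    obtain ⟨a, ha⟩ := ha
    refine ⟨a + 1, congrArg _ (funext fun i => ?_)⟩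
    rw [← ha, show i = ⟨0, Nat.one_pos⟩ from Fin.ext (Nat.lt_one_iff.1 i.2)]
  · exact absurd (h ▸ absVal_step_mem f q args) num_notMem_stepC

lemma eq_eps_of_absVal_eq_init {f : ℕ → CMNum} {t : Fm (CMSig C)} (h : absVal f t = .init) :
    t = .app .eps fun i => i.elim0 := by
  rcases t with _ | ⟨_ | _ | _ | q, args⟩
  · cases h
  · cases h
  · exact congrArg _ (funext fun i => i.elim0)
  · simp only [absVal] at h
    split_ifs at h
  · exact absurd (h ▸ absVal_step_mem f q args) init_notMem_stepC

lemma isVal_absVal {f : ℕ → CMNum} (hf : IsAbstraction f) : IsVal (CMmatrix C) (absVal f) := by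
  rintro (_ | _ | _ | q) args
  · simpa [absVal, CMmatrix, zeroC, zeroNum] using hf.1
  · rfl
  · show absVal f _ ∈ succC C (absVal f (args ⟨0, Nat.one_pos⟩))
    simp only [absVal]
    split_ifs with ha
    · have hb := ha.choose_spec
      generalize ha.choose = b at hb ⊢
      rw [hb, absVal_enc]
      exact ⟨_, hf.2 b, rfl⟩
    · rcases hx : absVal f (args ⟨0, Nat.one_pos⟩) with y | _ | _ | _
      · exact absurd (exists_eq_enc_of_absVal_eq_num hx) ha
      all_goals rfl
  · exact absVal_step_mem f q args

lemma absVal_seqFm_compList {f : ℕ → CMNum} (hf : IsAbstraction f) {k : ℕ} {cfg : Config C}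
    (hk : steps C k = some cfg) : absVal f (seqFm C (compList C k)) = .conf cfg.1 (f ∘ cfg.2) :=
  (isVal_absVal hf).apply_seqFm_compList hf (absVal_enc f) hk

lemma exists_eq_enc_of_forall_absVal_step_eq_conf {q : C.Q} {B : Fm (CMSig C)}
    {zs : Fin C.n → Fm (CMSig C)}
    (hA : ∀ f, IsAbstraction f →
      ∃ q' r, absVal f (.app (.step q) (Fin.cons B zs)) = .conf q' r) :
    ∃ a : Fin C.n → ℕ, zs = (enc C ∘ a) ∧
      ∀ f, IsAbstraction f → stepOK C q (absVal f B) (f ∘ a) := by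
  have hstep (f) (hf : IsAbstraction f) :
      ∃ r, (∀ i, absVal f (zs i) = .num (r i)) ∧ stepOK C q (absVal f B) r := by
    obtain ⟨q', r, h⟩ := hA f hf
    obtain ⟨hr, hok, -⟩ := conf_mem_stepC_iff.1 (h ▸ absVal_step_mem f q (Fin.cons B zs))
    exact ⟨r, by simpa using hr, by simpa using hok⟩
  obtain ⟨_, hnum, -⟩ := hstep exact isAbstraction_exact
  choose a ha using fun i => exists_eq_enc_of_absVal_eq_num (hnum i)
  refine ⟨a, funext ha, fun f hf => ?_⟩
  obtain ⟨r, hr, hok⟩ := hstep f hf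
  convert hok
  funext i
  simpa [ha, absVal_enc] using hr i

lemma exists_eq_seqFm_of_forall_absVal_eq_conf (A : Fm (CMSig C))
    (hA : ∀ f, IsAbstraction f → ∃ q r, absVal f A = .conf q r) :
    ∃ k cfg, steps C k = some cfg ∧ A = seqFm C (compList C k) := by
  induction A with
  | var => obtain ⟨_, _, ⟨⟩⟩ := hA exact isAbstraction_exact
  | app c args ih =>
    rcases c with _ | _ | _ | q
    · obtain ⟨_, _, ⟨⟩⟩ := hA exact isAbstraction_exact
    · obtain ⟨_, _, ⟨⟩⟩ := hA exact isAbstraction_exact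
    · obtain ⟨_, _, h⟩ := hA exact isAbstraction_exact
      simp only [absVal] at h
      split_ifs at h
    obtain ⟨B, zs, rfl⟩ : ∃ B zs, args = Fin.cons B zs :=
      ⟨_, _, (Fin.cons_self_tail args).symm⟩
    obtain ⟨a, rfl, hok⟩ := exists_eq_enc_of_forall_absVal_step_eq_conf hA
    by_cases hB : B = .app .eps fun i => i.elim0
    · subst hB
      obtain ⟨rfl, rfl⟩ := forall_stepOK_init_iff.1 hok
      exact ⟨0, _, rfl, rfl⟩
    · have hBconf (f) (hf : IsAbstraction f) : ∃ q r, absVal f B = .conf q r :=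
        (eq_init_or_conf_of_stepOK (hok f hf)).resolve_left
          (hB ∘ eq_eps_of_absVal_eq_init)
      obtain ⟨k, cfg, hk, rfl⟩ := ih ⟨0, Nat.succ_pos _⟩ hBconf
      have hnext : nextConf C cfg = some (q, a) := forall_stepOK_conf_iff.1 fun f hf =>
        absVal_seqFm_compList hf hk ▸ hok f hf
      have hk' : steps C (k + 1) = some (q, a) := steps_succ_eq_some.2 ⟨cfg, hk, hnext⟩
      exact ⟨k + 1, _, hk', (seqFm_compList_succ hk').symm⟩

end CounterMachine

open CMNum CounterMachine

/-- For every formula A over Σ_C: the computation comp(C,0⃗) is finite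
(i.e. some step k reaches a halting configuration) and A = seq(comp(C,0⃗)), if and only if
A is a theorem of the logic of ℂ. -/
theorem stmt_7 (C : CounterMachine) (A : Fm (CMSig C)) :
    (∃ (k : ℕ) (cfg : Config C), steps C k = some cfg ∧ Halting C cfg ∧
        A = seqFm C (compList C k)) ↔
      Entails (CMmatrix C) ∅ A := by
  constructor
  · rintro ⟨k, cfg, hk, hhalt, rfl⟩ v hv -
    obtain ⟨g, hg, hgv⟩ := hv.exists_isAbstraction
    exact ⟨_, _, hv.apply_seqFm_compList hg hgv hk, hhalt⟩
  · intro hA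
    have hD (f) (hf : IsAbstraction f) : absVal f A ∈ (CMmatrix C).D :=
      hA _ (isVal_absVal hf) (by simp)
    obtain ⟨k, cfg, hk, rfl⟩ := exists_eq_seqFm_of_forall_absVal_eq_conf A fun f hf =>
      let ⟨q, r, h, _⟩ := hD f hf; ⟨q, r, h⟩
    obtain ⟨q, r, hq, hhalt⟩ := hD exact isAbstraction_exact
    rw [absVal_seqFm_compList isAbstraction_exact hk] at hq
    obtain ⟨rfl, -⟩ := CMVal.conf.inj hq
    exact ⟨k, cfg, hk, hhalt, rfl⟩
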